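/- For any permutation p of {1,...,n}, the number of entries positioned strictly between the values 1 and 2 in SC_231(p) is at most the number of entries positioned strictly between the values 1 and 2 in p. -/

import Mathlib

/-- One step-by-step implementation of the `SC_231` stack-sorting machine.
`sc231Aux input stack out`: the next input entry is pushed onto the stack unless
pushing it would create a consecutive occurrence of the pattern `231` read from
top to bottom among the stack entries (i.e. the incoming `x` on top of `y`, `z`
with `z < x < y`), in which case the top of the stack is popped and appended to
the output; once the input is exhausted the remaining stack entries are popped. -/
def sc231Aux : List ℕ → List ℕ → List ℕ → List ℕ
  | [], stack, out => out ++ stack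
  | x :: rest, y :: z :: s, out =>
      if z < x ∧ x < y then sc231Aux (x :: rest) (z :: s) (out ++ [y])
      else sc231Aux rest (x :: y :: z :: s) out
  | x :: rest, stack, out => sc231Aux rest (x :: stack) out
termination_by input stack _ => 2 * input.length + stack.length
decreasing_by all_goals (simp; try omega)

/-- The consecutive-pattern-avoiding stack sort map `SC_231`. -/
def SC231 (p : List ℕ) : List ℕ := sc231Aux p [] []

/-- The list of entries that are *pre-popped* while `SC_231` processes the
input, i.e. popped while input entries still remain. -/
def prePopsAux : List ℕ → List ℕ → List ℕ
  | [], _ => []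
  | x :: rest, y :: z :: s =>
      if z < x ∧ x < y then y :: prePopsAux (x :: rest) (z :: s)
      else prePopsAux rest (x :: y :: z :: s)
  | x :: rest, stack => prePopsAux rest (x :: stack)
termination_by input stack => 2 * input.length + stack.length
decreasing_by all_goals (simp; try omega)

def prePops (p : List ℕ) : List ℕ := prePopsAux p []

/-- `p` has a peak: an interior position whose entry exceeds both neighbours. -/
def HasPeak (p : List ℕ) : Prop :=
  ∃ i, i + 2 < p.length ∧ p[i]! < p[i+1]! ∧ p[i+2]! < p[i+1]!

/-- `p` is a permutation of `{1, …, n}` (written as a list of its entries). -/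
def IsPermOf (n : ℕ) (p : List ℕ) : Prop := p.Perm (List.range' 1 n)

/-- `p` contains the (classical) pattern `q`. -/
def ContainsPat (p q : List ℕ) : Prop :=
  ∃ s : List ℕ, s.Sublist p ∧ s.length = q.length ∧
    ∀ i j, i < s.length → j < s.length → (s[i]! < s[j]! ↔ q[i]! < q[j]!)

def AvoidsPat (p q : List ℕ) : Prop := ¬ ContainsPat p q

/-- The sort-number of `p`: the least `k` with `SC_231^k(p)` peakless. -/
noncomputable def sortNum (p : List ℕ) : ℕ := sInf {k | ¬ HasPeak (SC231^[k] p)}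

/-- The number of entries strictly between the values `1` and `2` in a permutation. -/
def between12 (p : List ℕ) : ℕ :=
  max (p.idxOf 1) (p.idxOf 2) - min (p.idxOf 1) (p.idxOf 2) - 1

/-!
Read `input.reverse ++ stack` as one word. A push of the next input entry leaves this word
unchanged, and a pop deletes an entry `y` with `z < x < y` for entries `x`, `z`, so `y ≥ 3`
as soon as all entries are positive. Hence the distance between `1` and `2` in the word never
grows. The word starts as `p.reverse`, and at the end it is the final stack, which is the output
with the pre-popped entries, none of them `1` or `2`, removed from its front.
-/

theorem between12_append_of_notMem {l₁ : List ℕ} (l₂ : List ℕ) (h1 : 1 ∉ l₁) (h2 : 2 ∉ l₁) :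
    between12 (l₁ ++ l₂) = between12 l₂ := by
  simp only [between12, List.idxOf_append_of_notMem h1, List.idxOf_append_of_notMem h2]
  omega

theorem between12_append_le_append_cons (l₁ l₂ : List ℕ) {y : ℕ} (hy1 : y ≠ 1) (hy2 : y ≠ 2) :
    between12 (l₁ ++ l₂) ≤ between12 (l₁ ++ y :: l₂) := by
  have shift : ∀ a, y ≠ a →
      (l₁ ++ y :: l₂).idxOf a = (l₁ ++ l₂).idxOf a ∧ (l₁ ++ l₂).idxOf a < l₁.length ∨
      (l₁ ++ y :: l₂).idxOf a = (l₁ ++ l₂).idxOf a + 1 ∧ l₁.length ≤ (l₁ ++ l₂).idxOf a := by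
    intro a hya
    by_cases ha : a ∈ l₁
    · rw [List.idxOf_append_of_mem ha, List.idxOf_append_of_mem ha]
      exact .inl ⟨rfl, List.idxOf_lt_length_of_mem ha⟩
    · simp only [List.idxOf_append_of_notMem ha, List.idxOf_cons_ne _ hya]
      omega
  have := shift 1 hy1
  have := shift 2 hy2
  unfold between12
  omega

theorem List.Nodup.idxOf_reverse {α : Type*} [BEq α] [LawfulBEq α] {l : List α} (hl : l.Nodup)
    {a : α} (ha : a ∈ l) : l.reverse.idxOf a = l.length - 1 - l.idxOf a := by
  have hi := List.idxOf_lt_length_of_mem ha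
  have hj : l.length - 1 - l.idxOf a < l.reverse.length := by
    rw [List.length_reverse]
    omega
  have hrev : l.reverse[l.length - 1 - l.idxOf a] = a := by
    rw [List.getElem_reverse]
    convert List.getElem_idxOf hi using 2
    omega
  have := (List.nodup_reverse.2 hl).idxOf_getElem _ hj
  rwa [hrev] at this

theorem between12_reverse {l : List ℕ} (hl : l.Nodup) (h1 : 1 ∈ l) (h2 : 2 ∈ l) :
    between12 l.reverse = between12 l := by
  have := List.idxOf_lt_length_of_mem h1
  have := List.idxOf_lt_length_of_mem h2
  simp only [between12, hl.idxOf_reverse h1, hl.idxOf_reverse h2]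
  omega

theorem between12_sc231Aux_le (input stack out : List ℕ) (h0i : 0 ∉ input) (h0s : 0 ∉ stack)
    (h1 : 1 ∉ out) (h2 : 2 ∉ out) :
    between12 (sc231Aux input stack out) ≤ between12 (input.reverse ++ stack) := by
  induction input, stack, out using sc231Aux.induct with
  | case1 stack out =>
    rw [sc231Aux.eq_1, between12_append_of_notMem stack h1 h2, List.reverse_nil, List.nil_append]
  | case2 x rest y z s out hpop ih =>
    have hz : z ≠ 0 := fun h => h0s (h ▸ List.mem_cons_of_mem _ List.mem_cons_self)
    have hy1 : y ≠ 1 := by omega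
    have hy2 : y ≠ 2 := by omega
    rw [sc231Aux.eq_2, if_pos hpop]
    calc _ ≤ between12 ((x :: rest).reverse ++ z :: s) :=
          ih h0i (by simp_all) (by simp [h1, hy1.symm]) (by simp [h2, hy2.symm])
      _ ≤ _ := between12_append_le_append_cons _ _ hy1 hy2
  | case3 x rest y z s out hpush ih =>
    rw [sc231Aux.eq_2, if_neg hpush]
    simpa using ih (by simp_all) (by simp_all) h1 h2
  | case4 x rest stack out hshort ih =>
    rw [sc231Aux.eq_3 _ _ _ _ hshort]
    simpa using ih (by simp_all) (by simp_all) h1 h2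

/-- Applying `SC_231` never increases the number of entries between the values `1` and `2`. -/
theorem between12_SC231_le (n : ℕ) (hn : 2 ≤ n) (p : List ℕ) (hp : IsPermOf n p) :
    between12 (SC231 p) ≤ between12 p := by
  have hmem (a : ℕ) : a ∈ p ↔ 1 ≤ a ∧ a < 1 + n := hp.mem_iff.trans List.mem_range'_1
  have hnodup : p.Nodup := hp.nodup_iff.2 List.nodup_range'
  calc between12 (SC231 p)
      ≤ between12 (p.reverse ++ []) :=
        between12_sc231Aux_le p [] [] (by simp [hmem]) List.not_mem_nil List.not_mem_nil
          List.not_mem_nil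
    _ = between12 p := by
        rw [List.append_nil, between12_reverse hnodup ((hmem 1).2 ⟨le_rfl, by omega⟩)
          ((hmem 2).2 ⟨by omega, by omega⟩)]
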